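/- arXiv:1005.0766 — 3 statements merged into one kernel-verified Lean document; each statement's English description precedes it below -/
import Mathlib

section
/- Let r ≥ 2, 0 < ρ < 1, and suppose n < ρ·(k-1)·log d / (d·log r). If T is uniformly distributed on the set of labeled forests with d nodes and k edges, then for any estimator T̂ mapping n samples from ({1,...,r}^d)^n to forests with k edges, the error probability P(T̂ ≠ T) > 1 - exp((ρ-1)(k-1)·log d), which tends to 1 as (k,d) → ∞. -/
open Finset

/-- The set of labeled forests on `d` nodes with exactly `k` edges. -/
abbrev ForestsWith (d k : ℕ) := {G : SimpleGraph (Fin d) // G.IsAcyclic ∧ G.edgeSet.ncard = k}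

noncomputable instance (d k : ℕ) : Fintype (ForestsWith d k) := Fintype.ofFinite _

noncomputable instance (d k : ℕ) : DecidableEq (ForestsWith d k) := Classical.decEq _

/-
If `p` is the joint law of the forest and the samples, with uniform forest marginal, an estimator
`f` is right only on the pairs `(f x, x)`, each of mass at most `1 / |T|`; so it succeeds with
probability at most `r ^ (d n) / |T|`. The hypothesis on `n` gives `r ^ (d n) < d ^ (ρ (k - 1))`,
and Prüfer decoding of sequences in `[d] ^ (k - 1)` injects them into forests with `k` edges,
so `|T| ≥ d ^ (k - 1)`.
-/

namespace SimpleGraph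

variable {V : Type*} {G : SimpleGraph V}

theorem IsAcyclic.sup_edge_of_forall_not_adj (hG : G.IsAcyclic) {v : V} (hv : ∀ w, ¬G.Adj v w)
    (u : V) : (G ⊔ edge v u).IsAcyclic := by
  obtain rfl | hvu := eq_or_ne v u
  · rwa [edge_self_eq_bot, sup_bot_eq]
  refine hG.sup_edge_of_not_reachable fun ⟨p⟩ ↦ ?_
  cases p with
  | nil => exact hvu rfl
  | cons h _ => exact hv _ h

end SimpleGraph

namespace Prufer

variable {V : Type*} [LinearOrder V] [OrderTop V] {U : Finset V} {L A B : List V} {a b u : V}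

/-! Prüfer decoding: each entry `a` of the list is joined to the least vertex of `U` that does not
occur in the rest of the list (from `a` on), and that vertex is then removed from `U`. The last
edge joins the two least remaining vertices, so that when `#U > L.length + 2` the result is a
forest rather than a tree. -/

def leaf (U : Finset V) (L : List V) : V := (U \ L.toFinset).inf id

def decode : Finset V → List V → Finset (Sym2 V)
  | U, [] => {s(leaf U [], leaf (U.erase (leaf U [])) [])}
  | U, a :: L => insert s(leaf U (a :: L), a) (decode (U.erase (leaf U (a :: L))) L)

theorem leaf_mem_sdiff (h : L.length < #U) : leaf U L ∈ U \ L.toFinset := by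
  have hne : (U \ L.toFinset).Nonempty := by
    rw [← card_pos]
    have := le_card_sdiff L.toFinset U
    have := L.toFinset_card_le
    omega
  obtain ⟨w, hw, hw_eq⟩ := exists_mem_eq_inf _ hne id
  rw [leaf, hw_eq]
  exact hw

theorem leaf_mem (h : L.length < #U) : leaf U L ∈ U := (mem_sdiff.1 (leaf_mem_sdiff h)).1

theorem leaf_notMem (h : L.length < #U) : leaf U L ∉ L :=
  fun hL ↦ (mem_sdiff.1 (leaf_mem_sdiff h)).2 (List.mem_toFinset.2 hL)

theorem leaf_le (hu : u ∈ U) (huL : u ∉ L) : leaf U L ≤ u :=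
  inf_le (f := id) (mem_sdiff.2 ⟨hu, mt List.mem_toFinset.1 huL⟩)

theorem card_erase_leaf (h : (a :: L).length + 2 ≤ #U) :
    L.length + 2 ≤ #(U.erase (leaf U (a :: L))) := by
  rw [card_erase_of_mem (leaf_mem (by omega))]
  simp only [List.length_cons] at h
  omega

theorem leaf_nil_mem (h : 2 ≤ #U) : leaf U [] ∈ U := leaf_mem (two_pos.trans_le h)

theorem leaf_erase_leaf_nil_mem (h : 2 ≤ #U) :
    leaf (U.erase (leaf U [])) [] ∈ U.erase (leaf U []) :=
  leaf_mem (by rw [card_erase_of_mem (leaf_nil_mem h), List.length_nil]; omega)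

theorem mem_or_mem_of_mem_decode (hU : L.length + 2 ≤ #U) {e : Sym2 V} (he : e ∈ decode U L)
    {x : V} (hx : x ∈ e) : x ∈ U ∨ x ∈ L := by
  induction L generalizing U with
  | nil =>
    rw [decode, mem_singleton] at he
    subst he
    rcases Sym2.mem_iff.1 hx with rfl | rfl
    · exact .inl (leaf_nil_mem hU)
    · exact .inl (mem_of_mem_erase (leaf_erase_leaf_nil_mem hU))
  | cons a L ih =>
    rw [decode, mem_insert] at he
    rcases he with rfl | he
    · rcases Sym2.mem_iff.1 hx with rfl | rfl
      · exact .inl (leaf_mem (by omega))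
      · exact .inr List.mem_cons_self
    · rcases ih (card_erase_leaf hU) he with h | h
      · exact .inl (mem_of_mem_erase h)
      · exact .inr (List.mem_cons_of_mem a h)

theorem leaf_notMem_of_mem_decode_erase (hU : (a :: L).length + 2 ≤ #U) {e : Sym2 V}
    (he : e ∈ decode (U.erase (leaf U (a :: L))) L) : leaf U (a :: L) ∉ e := fun hv ↦ by
  rcases mem_or_mem_of_mem_decode (card_erase_leaf hU) he hv with h | h
  · exact notMem_erase _ _ h
  · exact leaf_notMem (by omega) (List.mem_cons_of_mem a h)

theorem card_decode (hU : L.length + 2 ≤ #U) : #(decode U L) = L.length + 1 := by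
  induction L generalizing U with
  | nil => simp [decode]
  | cons a L ih =>
    rw [decode, card_insert_of_notMem fun h ↦ leaf_notMem_of_mem_decode_erase hU h
      (Sym2.mem_mk_left _ _), ih (card_erase_leaf hU), List.length_cons]

theorem not_isDiag_of_mem_decode (hU : L.length + 2 ≤ #U) {e : Sym2 V} (he : e ∈ decode U L) :
    ¬e.IsDiag := by
  induction L generalizing U with
  | nil =>
    rw [decode, mem_singleton] at he
    subst he
    exact fun h ↦ ne_of_mem_erase (leaf_erase_leaf_nil_mem hU) (Sym2.mk_isDiag_iff.1 h).symm
  | cons a L ih =>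
    rw [decode, mem_insert] at he
    rcases he with rfl | he
    · intro h
      refine leaf_notMem (U := U) (L := a :: L) (by omega) ?_
      rw [Sym2.mk_isDiag_iff.1 h]
      exact List.mem_cons_self
    · exact ih (card_erase_leaf hU) he

theorem edgeSet_fromEdgeSet_decode (hU : L.length + 2 ≤ #U) :
    (SimpleGraph.fromEdgeSet (decode U L : Set (Sym2 V))).edgeSet = decode U L := by
  rw [SimpleGraph.edgeSet_fromEdgeSet, sdiff_eq_left, Set.disjoint_left]
  exact fun _ he ↦ not_isDiag_of_mem_decode hU he

theorem isAcyclic_fromEdgeSet_decode (hU : L.length + 2 ≤ #U) :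
    (SimpleGraph.fromEdgeSet (decode U L : Set (Sym2 V))).IsAcyclic := by
  induction L generalizing U with
  | nil =>
    have := SimpleGraph.isAcyclic_bot.sup_edge_of_forall_not_adj (fun _ ↦ id)
      (v := leaf U []) (leaf (U.erase (leaf U [])) [])
    rwa [bot_sup_eq, SimpleGraph.edge, ← coe_singleton] at this
  | cons a L ih =>
    rw [decode, coe_insert, Set.insert_eq, SimpleGraph.fromEdgeSet_union, sup_comm]
    refine (ih (card_erase_leaf hU)).sup_edge_of_forall_not_adj (fun w hw ↦ ?_) _
    rw [SimpleGraph.fromEdgeSet_adj] at hw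
    exact leaf_notMem_of_mem_decode_erase hU hw.1 (Sym2.mem_mk_left _ _)

-- The only element of `U \ (a :: L)` below `u`, if any, is the removed leaf, and only `a` can
-- take its place.
theorem card_filter_lt_erase_leaf_le_one (hU : (a :: L).length + 2 ≤ #U)
    (hsmall : #{w ∈ U \ (a :: L).toFinset | w < u} ≤ 1) :
    #{w ∈ (U.erase (leaf U (a :: L))) \ L.toFinset | w < u} ≤ 1 := by
  have hbelow : ∀ w ∈ {w ∈ U \ (a :: L).toFinset | w < u}, w = leaf U (a :: L) := fun w hw ↦ by
    refine card_le_one.1 hsmall w hw _ (mem_filter.2 ⟨leaf_mem_sdiff (by omega), ?_⟩)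
    exact (inf_le (f := id) (mem_filter.1 hw).1).trans_lt (mem_filter.1 hw).2
  suffices ∀ w ∈ {w ∈ (U.erase (leaf U (a :: L))) \ L.toFinset | w < u}, w = a from
    card_le_one.2 fun w₁ h₁ w₂ h₂ ↦ (this w₁ h₁).trans (this w₂ h₂).symm
  intro w hw
  simp only [mem_filter, mem_sdiff, mem_erase, List.mem_toFinset] at hw
  by_contra hwa
  refine hw.1.1.1 (hbelow w ?_)
  simp only [mem_filter, mem_sdiff, List.mem_toFinset, List.mem_cons, not_or]
  exact ⟨⟨hw.1.1.2, hwa, hw.1.2⟩, hw.2⟩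

-- Each occurrence of `u` in `L` gives an edge at `u`, and one more edge appears when `u` itself
-- is removed as a leaf or joined by the last edge.
theorem count_lt_card_filter_mem_decode (hU : L.length + 2 ≤ #U) (hu : u ∈ U)
    (hsmall : #{w ∈ U \ L.toFinset | w < u} ≤ 1) : L.count u < #{e ∈ decode U L | u ∈ e} := by
  induction L generalizing U with
  | nil =>
    rw [List.count_nil, decode, card_pos]
    refine ⟨_, mem_filter.2 ⟨mem_singleton_self _, ?_⟩⟩
    have hv₁ := leaf_nil_mem hU
    have hv₂ := leaf_erase_leaf_nil_mem hU
    by_contra hne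
    rw [Sym2.mem_iff, not_or] at hne
    have h₁ : leaf U [] < u := (leaf_le hu List.not_mem_nil).lt_of_ne (Ne.symm hne.1)
    have h₂ : leaf (U.erase (leaf U [])) [] < u :=
      (leaf_le (mem_erase.2 ⟨hne.1, hu⟩) List.not_mem_nil).lt_of_ne (Ne.symm hne.2)
    refine ne_of_mem_erase hv₂ (card_le_one.1 hsmall _ ?_ _ ?_).symm <;>
      simp only [mem_filter, mem_sdiff, List.toFinset_nil, notMem_empty, not_false_eq_true,
        and_true]
    exacts [⟨hv₁, h₁⟩, ⟨mem_of_mem_erase hv₂, h₂⟩]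
  | cons a L ih =>
    rw [decode, filter_insert]
    set v := leaf U (a :: L)
    have hvU : v ∈ U := leaf_mem (by omega)
    have hvL : v ∉ a :: L := leaf_notMem (by omega)
    have hnotin : s(v, a) ∉ decode (U.erase v) L := fun h ↦
      leaf_notMem_of_mem_decode_erase hU h (Sym2.mem_mk_left _ _)
    obtain rfl | huv := eq_or_ne u v
    · rw [List.count_eq_zero_of_not_mem hvL, if_pos (Sym2.mem_mk_left _ _)]
      exact card_pos.2 (insert_nonempty _ _)
    have h : L.count u < #{e ∈ decode (U.erase v) L | u ∈ e} :=
      ih (card_erase_leaf hU) (mem_erase.2 ⟨huv, hu⟩)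
        (card_filter_lt_erase_leaf_le_one hU hsmall)
    by_cases hua : u = a
    · subst hua
      rw [if_pos (Sym2.mem_mk_right _ _), List.count_cons_self,
        card_insert_of_notMem fun h ↦ hnotin (mem_filter.1 h).1]
      omega
    · rw [if_neg (by simp [huv, hua]), List.count_cons_of_ne (Ne.symm hua)]
      exact h

theorem filter_mem_leaf_decode (hU : (a :: L).length + 2 ≤ #U) :
    {e ∈ decode U (a :: L) | leaf U (a :: L) ∈ e} = {s(leaf U (a :: L), a)} := by
  rw [decode, filter_insert, if_pos (Sym2.mem_mk_left _ _),
    filter_false_of_mem fun _ ↦ leaf_notMem_of_mem_decode_erase hU, insert_empty]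

theorem two_le_card_filter_mem_decode (hU : (a :: L).length + 2 ≤ #U) (hu : u ∈ U)
    (hlt : u < leaf U (a :: L)) : 2 ≤ #{e ∈ decode U (a :: L) | u ∈ e} := by
  have hcount : 0 < (a :: L).count u :=
    List.count_pos_iff.2 (by_contra fun h ↦ hlt.not_ge (leaf_le hu h))
  have hsmall : #{w ∈ U \ (a :: L).toFinset | w < u} ≤ 1 := by
    have hnone (w) (hw : w ∈ U \ (a :: L).toFinset) : ¬w < u :=
      not_lt.2 (hlt.le.trans (inf_le (f := id) hw))
    rw [filter_false_of_mem hnone, card_empty]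
    exact zero_le_one
  have := count_lt_card_filter_mem_decode hU hu hsmall
  omega

-- `leaf U (a :: L)` is recovered from the decoded edges as the least vertex of `U` of degree
-- at most one.
theorem leaf_le_of_decode_eq (hA : (a :: A).length + 2 ≤ #U) (hB : (b :: B).length + 2 ≤ #U)
    (h : decode U (a :: A) = decode U (b :: B)) : leaf U (a :: A) ≤ leaf U (b :: B) := by
  by_contra hlt
  have := two_le_card_filter_mem_decode hA (leaf_mem (by omega)) (not_le.1 hlt)
  rw [h, filter_mem_leaf_decode hB, card_singleton] at this
  omega

theorem eq_of_decode_eq (hU : A.length + 2 ≤ #U) (hlen : A.length = B.length)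
    (h : decode U A = decode U B) : A = B := by
  induction A generalizing B U with
  | nil => exact (List.length_eq_zero_iff.1 hlen.symm).symm
  | cons a A ih =>
    obtain _ | ⟨b, B⟩ := B
    · simp at hlen
    have hB : (b :: B).length + 2 ≤ #U := hlen ▸ hU
    have hleaf : leaf U (a :: A) = leaf U (b :: B) :=
      (leaf_le_of_decode_eq hU hB h).antisymm (leaf_le_of_decode_eq hB hU h.symm)
    have hab : a = b := by
      have := congrArg (filter (leaf U (a :: A) ∈ ·)) h
      rw [filter_mem_leaf_decode hU, hleaf, filter_mem_leaf_decode hB, singleton_inj,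
        Sym2.congr_right] at this
      exact this
    subst hab
    have hnotA := leaf_notMem_of_mem_decode_erase hU (e := s(leaf U (a :: A), a))
    have hnotB := leaf_notMem_of_mem_decode_erase hB (e := s(leaf U (a :: B), a))
    rw [decode, decode, ← hleaf] at h
    rw [← hleaf] at hnotB
    have htail := congrArg (·.erase s(leaf U (a :: A), a)) h
    rw [erase_insert fun he ↦ hnotA he (Sym2.mem_mk_left _ _),
      erase_insert fun he ↦ hnotB he (Sym2.mem_mk_left _ _)] at htail
    rw [ih (card_erase_leaf hU) (by simpa using hlen) htail]

end Prufer

theorem pow_le_card_forestsWith {d k : ℕ} (hk1 : 1 ≤ k) (hk : k ≤ d - 1) :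
    d ^ (k - 1) ≤ Fintype.card (ForestsWith d k) := by
  have : NeZero d := ⟨by omega⟩
  have hU (g : Fin (k - 1) → Fin d) : (List.ofFn g).length + 2 ≤ #(univ : Finset (Fin d)) := by
    rw [List.length_ofFn, card_univ, Fintype.card_fin]
    omega
  let forest (g : Fin (k - 1) → Fin d) : ForestsWith d k :=
    ⟨.fromEdgeSet (Prufer.decode univ (List.ofFn g)),
      Prufer.isAcyclic_fromEdgeSet_decode (hU g), by
      rw [Prufer.edgeSet_fromEdgeSet_decode (hU g), Set.ncard_coe_finset,
        Prufer.card_decode (hU g), List.length_ofFn]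
      omega⟩
  have hinj : Function.Injective forest := fun g₁ g₂ h ↦ by
    have := congrArg (fun F : ForestsWith d k ↦ F.1.edgeSet) h
    simp only [forest, Prufer.edgeSet_fromEdgeSet_decode (hU _), coe_inj] at this
    exact List.ofFn_injective (Prufer.eq_of_decode_eq (hU g₁) (by simp) this)
  simpa using Fintype.card_le_of_injective forest hinj

theorem one_sub_card_div_card_le_sum_ite_ne {Θ X : Type*} [Fintype Θ] [Nonempty Θ]
    [DecidableEq Θ] [Fintype X] (p : Θ → X → ℝ) (hp : ∀ t x, 0 ≤ p t x)
    (hmarg : ∀ t, ∑ x, p t x = 1 / Fintype.card Θ) (f : X → Θ) :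
    1 - (Fintype.card X : ℝ) / Fintype.card Θ ≤ ∑ t, ∑ x, if f x ≠ t then p t x else 0 := by
  have hΘ : (Fintype.card Θ : ℝ) ≠ 0 := by exact_mod_cast Fintype.card_ne_zero
  have htotal : ∑ t, ∑ x, p t x = 1 := by simp [hmarg, hΘ]
  have hcorrect : ∑ t, ∑ x, (if f x = t then p t x else 0) = ∑ x, p (f x) x := by
    rw [sum_comm]
    simp
  have herror : ∑ t, ∑ x, (if f x ≠ t then p t x else 0) = 1 - ∑ x, p (f x) x := by
    rw [← htotal, ← hcorrect, ← sum_sub_distrib]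
    refine sum_congr rfl fun t _ ↦ ?_
    rw [← sum_sub_distrib]
    refine sum_congr rfl fun x _ ↦ ?_
    split_ifs <;> simp_all
  have hcorrect_le : ∑ x, p (f x) x ≤ Fintype.card X / Fintype.card Θ := calc
    ∑ x, p (f x) x ≤ ∑ _x : X, (1 / Fintype.card Θ : ℝ) := sum_le_sum fun x _ ↦
      hmarg (f x) ▸ single_le_sum (fun x' _ ↦ hp (f x) x') (mem_univ x)
    _ = Fintype.card X / Fintype.card Θ := by simp [div_eq_mul_inv]
  linarith

theorem pow_lt_exp_of_lt_div_mul_log {d n r : ℕ} {c : ℝ} (hn : (n : ℝ) < c / (d * Real.log r)) :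
    (r : ℝ) ^ (d * n) < Real.exp c := by
  have hpos : 0 < (d : ℝ) * Real.log r := by
    refine (mul_nonneg d.cast_nonneg (Real.log_natCast_nonneg r)).lt_of_ne fun h ↦ ?_
    rw [← h, div_zero] at hn
    exact hn.not_ge n.cast_nonneg
  have hr : (0 : ℝ) < r := by
    refine Nat.cast_pos.2 (Nat.pos_of_ne_zero fun h ↦ ?_)
    simp [h] at hpos
  have := (lt_div_iff₀ hpos).1 hn
  calc (r : ℝ) ^ (d * n) = Real.exp (((d * n : ℕ) : ℝ) * Real.log r) := by
        rw [Real.exp_nat_mul, Real.exp_log hr]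
    _ < Real.exp c := by
      rw [Real.exp_lt_exp]
      push_cast
      linarith

theorem sample_complexity_lower_bound_fixed_k_general
    (d k n r : ℕ) (hk1 : 1 ≤ k) (hk : k ≤ d - 1)
    (ρ : ℝ)
    (hn : (n : ℝ) < ρ * (((k : ℝ) - 1) * Real.log d) / ((d : ℝ) * Real.log r))
    (p : ForestsWith d k → (Fin n → Fin d → Fin r) → ℝ)
    (hp : ∀ t x, 0 ≤ p t x)
    (hmarg : ∀ t, ∑ x : Fin n → Fin d → Fin r, p t x = 1 / Fintype.card (ForestsWith d k))
    (f : (Fin n → Fin d → Fin r) → ForestsWith d k) :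
    1 - Real.exp ((ρ - 1) * ((k : ℝ) - 1) * Real.log d) <
      ∑ t : ForestsWith d k, ∑ x : Fin n → Fin d → Fin r, if f x ≠ t then p t x else 0 := by
  have hd : (0 : ℝ) < d := by exact_mod_cast (by omega : 0 < d)
  have hN := pow_le_card_forestsWith hk1 hk
  have : Nonempty (ForestsWith d k) :=
    Fintype.card_pos_iff.1 ((pow_pos (by omega) _).trans_le hN)
  have hpow : (d : ℝ) ^ (k - 1) = Real.exp (((k : ℝ) - 1) * Real.log d) := by
    rw [← Nat.cast_pred hk1, Real.exp_nat_mul, Real.exp_log hd]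
  refine lt_of_lt_of_le ?_ (one_sub_card_div_card_le_sum_ite_ne p hp hmarg f)
  rw [sub_lt_sub_iff_left, show Fintype.card (Fin n → Fin d → Fin r) = r ^ (d * n) by
    simp [pow_mul]]
  calc ((r ^ (d * n) : ℕ) : ℝ) / Fintype.card (ForestsWith d k)
      ≤ (r : ℝ) ^ (d * n) / (d : ℝ) ^ (k - 1) := by
        push_cast
        gcongr
        exact_mod_cast hN
    _ < Real.exp (ρ * (((k : ℝ) - 1) * Real.log d)) / Real.exp (((k : ℝ) - 1) * Real.log d) := by
        rw [hpow]
        gcongr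
        exact pow_lt_exp_of_lt_div_mul_log hn
    _ = Real.exp ((ρ - 1) * ((k : ℝ) - 1) * Real.log d) := by
        rw [← Real.exp_sub]
        ring_nf

/-- Lower bound on sample complexity, case (a): if the true forest `T` is uniform on the
set of labeled forests with `d` nodes and `k` edges, samples take values in `X^d` with
`|X| = r`, and `n < ρ·(k-1)·log d / (d·log r)` with `ρ < 1`, then any estimator
`f : (X^d)^n → T_k^d` has error probability exceeding `1 - exp((ρ-1)(k-1)·log d)`. -/
theorem sample_complexity_lower_bound_fixed_k
    (d k n r : ℕ) (hr : 2 ≤ r) (hd : 2 ≤ d) (hk1 : 1 ≤ k) (hk : k ≤ d - 1)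
    (ρ : ℝ) (hρ0 : 0 < ρ) (hρ1 : ρ < 1)
    (hn : (n : ℝ) < ρ * (((k : ℝ) - 1) * Real.log d) / ((d : ℝ) * Real.log r))
    (p : ForestsWith d k → (Fin n → Fin d → Fin r) → ℝ)
    (hp : ∀ t x, 0 ≤ p t x)
    (hmarg : ∀ t, ∑ x : Fin n → Fin d → Fin r, p t x = 1 / Fintype.card (ForestsWith d k))
    (f : (Fin n → Fin d → Fin r) → ForestsWith d k) :
    1 - Real.exp ((ρ - 1) * ((k : ℝ) - 1) * Real.log d) <
      ∑ t : ForestsWith d k, ∑ x : Fin n → Fin d → Fin r, if f x ≠ t then p t x else 0 :=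
  sample_complexity_lower_bound_fixed_k_general d k n r hk1 hk ρ hn p hp hmarg f
end

section
/- Let P be a probability distribution on a finite set Y with minimum entry κ := min_a P(a) > 0, and let Q be any probability distribution on Y. Then D(Q||P) ≤ (2·log 2 / κ) · D(P||Q). -/
open Finset

/-- Kullback-Leibler divergence between two distributions on a finite alphabet. -/
noncomputable def klDiv {Y : Type*} [Fintype Y] (Q P : Y → ℝ) : ℝ :=
  ∑ a : Y, Q a * Real.log (Q a / P a)

lemma aux_log_upper {x : ℝ} (hx : 1 ≤ x) : 2 * Real.log x ≤ x - x⁻¹ := by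
  have hder : ∀ y : ℝ, 1 ≤ y →
      HasDerivAt (fun y : ℝ => y - y⁻¹ - 2 * Real.log y) (1 - (-(y^2)⁻¹) - 2 * y⁻¹) y := by
    intro y hy
    have hy0 : y ≠ 0 := ne_of_gt (by linarith : (0:ℝ) < y)
    exact ((hasDerivAt_id y).sub (hasDerivAt_inv hy0)).sub
      ((Real.hasDerivAt_log hy0).const_mul 2)
  have hmono : MonotoneOn (fun y : ℝ => y - y⁻¹ - 2 * Real.log y) (Set.Ici 1) := by
    apply monotoneOn_of_deriv_nonneg (convex_Ici 1)
    · exact fun y hy => ((hder y hy).continuousAt).continuousWithinAt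
    · intro y hy
      rw [interior_Ici] at hy
      exact ((hder y (le_of_lt hy)).differentiableAt).differentiableWithinAt
    · intro y hy
      rw [interior_Ici] at hy
      rw [(hder y (le_of_lt hy)).deriv]
      have hy' : (1:ℝ) < y := hy
      have hy0 : 0 < y := by linarith
      have h1 : (y^2)⁻¹ = y⁻¹ * y⁻¹ := by rw [sq, mul_inv]
      have h2 : y * y⁻¹ = 1 := mul_inv_cancel₀ (ne_of_gt hy0)
      nlinarith [sq_nonneg (1 - y⁻¹)]
  have h := hmono (Set.mem_Ici.2 le_rfl) (Set.mem_Ici.2 hx) hx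
  simp only [Real.log_one, inv_one] at h
  linarith

lemma aux_log_lower {x : ℝ} (hx : 1 ≤ x) : 2 - 4 * (x + 1)⁻¹ ≤ Real.log x := by
  have hder : ∀ y : ℝ, 1 ≤ y →
      HasDerivAt (fun y : ℝ => Real.log y - 2 + 4 * (y + 1)⁻¹)
        (y⁻¹ + 4 * (-1 / (y + 1)^2)) y := by
    intro y hy
    have hy0 : y ≠ 0 := ne_of_gt (by linarith : (0:ℝ) < y)
    have hy1 : y + 1 ≠ 0 := ne_of_gt (by linarith : (0:ℝ) < y + 1)
    have h := ((Real.hasDerivAt_log hy0).sub_const 2).add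
      ((((hasDerivAt_id y).add_const 1).inv hy1).const_mul 4)
    exact h
  have hmono : MonotoneOn (fun y : ℝ => Real.log y - 2 + 4 * (y + 1)⁻¹) (Set.Ici 1) := by
    apply monotoneOn_of_deriv_nonneg (convex_Ici 1)
    · exact fun y hy => ((hder y hy).continuousAt).continuousWithinAt
    · intro y hy
      rw [interior_Ici] at hy
      exact ((hder y (le_of_lt hy)).differentiableAt).differentiableWithinAt
    · intro y hy
      rw [interior_Ici] at hy
      rw [(hder y (le_of_lt hy)).deriv]
      have hy' : (1:ℝ) < y := hy
      have hy0 : 0 < y := by linarith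
      have hy1 : (0:ℝ) < y + 1 := by linarith
      have heq : y⁻¹ + 4 * (-1 / (y + 1)^2) = (y - 1)^2 / (y * (y + 1)^2) := by
        field_simp
        ring
      rw [heq]
      positivity
  have h := hmono (Set.mem_Ici.2 le_rfl) (Set.mem_Ici.2 hx) hx
  norm_num at h
  linarith

lemma key_ineq {C t : ℝ} (hC : 1 ≤ C) (ht : 0 < t) (htC : t ≤ C) :
    (C + t) * Real.log t ≤ (1 + C) * (t - 1) := by
  rcases le_total 1 t with h1 | h1
  · -- case t ≥ 1
    set s := Real.sqrt t with hs
    have hs1 : 1 ≤ s := by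
      rw [hs, show (1:ℝ) = Real.sqrt 1 by simp]
      exact Real.sqrt_le_sqrt h1
    have hs0 : 0 < s := by linarith
    have hss : s * s = t := Real.mul_self_sqrt (le_of_lt ht)
    have hsC : s ≤ C := by
      have h2 : s ≤ Real.sqrt C := Real.sqrt_le_sqrt htC
      have h3 : Real.sqrt C ≤ C := by
        have h4 : Real.sqrt C ≤ Real.sqrt (C * C) := Real.sqrt_le_sqrt (by nlinarith)
        rwa [Real.sqrt_mul_self (by linarith : (0:ℝ) ≤ C)] at h4
      linarith
    have hlog : Real.log t = 2 * Real.log s := by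
      rw [hs, Real.log_sqrt (le_of_lt ht)]
      ring
    have hup : 2 * Real.log s ≤ s - s⁻¹ := aux_log_upper hs1
    have hinv : s * s⁻¹ = 1 := mul_inv_cancel₀ (ne_of_gt hs0)
    have hkey : Real.log t * s ≤ t - 1 := by
      have h4 := mul_le_mul_of_nonneg_right hup (le_of_lt hs0)
      have h5 : (s - s⁻¹) * s = t - 1 := by
        rw [sub_mul, hss]
        rw [inv_mul_cancel₀ (ne_of_gt hs0)]
      rw [hlog]
      linarith [h4, h5.le, h5.ge]
    have hA : (C + t) * (Real.log t * s) ≤ (C + t) * (t - 1) :=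
      mul_le_mul_of_nonneg_left hkey (by linarith)
    have hB : 0 ≤ (t - 1) * ((s - 1) * (C - s)) := by
      apply mul_nonneg (by linarith)
      apply mul_nonneg <;> linarith
    have hfinal : (C + t) * Real.log t * s ≤ (1 + C) * (t - 1) * s := by
      nlinarith [hA, hB, hss]
    exact le_of_mul_le_mul_right hfinal hs0
  · -- case t ≤ 1
    have hy : 1 ≤ t⁻¹ := (one_le_inv_iff₀.mpr ⟨ht, h1⟩)
    have hL := aux_log_lower hy
    rw [Real.log_inv] at hL
    have h1t : (0:ℝ) < 1 + t := by linarith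
    have hflip : (t⁻¹ + 1)⁻¹ = t / (1 + t) := by
      rw [inv_eq_iff_eq_inv]
      field_simp
    rw [hflip] at hL
    have hP : 2 * (1 - t) ≤ (-Real.log t) * (1 + t) := by
      have h6 : (2 - 4 * (t / (1 + t))) * (1 + t) = 2 * (1 - t) := by
        field_simp
        ring
      have h7 := mul_le_mul_of_nonneg_right hL h1t.le
      linarith [h6.le, h6.ge]
    have step1 : (C + t) * (Real.log t * (1 + t)) ≤ (C + t) * (2 * (t - 1)) :=
      mul_le_mul_of_nonneg_left (by linarith) (by linarith)
    have step2 : (C + t) * (2 * (t - 1)) ≤ (1 + C) * (t - 1) * (1 + t) := by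
      nlinarith [mul_nonneg (mul_nonneg (by linarith : (0:ℝ) ≤ 1 - t) (by linarith : (0:ℝ) ≤ 1 - t)) (by linarith : (0:ℝ) ≤ C - 1)]
    have hfinal : (C + t) * Real.log t * (1 + t) ≤ (1 + C) * (t - 1) * (1 + t) := by
      nlinarith [step1, step2]
    exact le_of_mul_le_mul_right hfinal h1t

/-- Reverse comparison of KL divergences: if `P` has minimum entry `κ > 0`,
then `D(Q||P) ≤ (2 log 2 / κ) · D(P||Q)`. -/
theorem klDiv_swap_comparison {Y : Type*} [Fintype Y] [Nonempty Y]
    (P Q : Y → ℝ)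
    (hP : ∀ a, 0 < P a) (hPsum : ∑ a, P a = 1)
    (hQ : ∀ a, 0 < Q a) (hQsum : ∑ a, Q a = 1) :
    klDiv Q P ≤
      (2 * Real.log 2 / (Finset.univ.inf' Finset.univ_nonempty P)) * klDiv P Q := by
  set κ := Finset.univ.inf' Finset.univ_nonempty P with hκdef
  have hκle : ∀ a, κ ≤ P a := fun a => Finset.inf'_le _ (Finset.mem_univ a)
  have hκpos : 0 < κ := by
    rw [hκdef, Finset.lt_inf'_iff]
    exact fun b _ => hP b
  have hP1 : ∀ a, P a ≤ 1 := by
    intro a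
    have := Finset.single_le_sum (f := P) (fun i _ => (hP i).le) (Finset.mem_univ a)
    rwa [hPsum] at this
  have hQ1 : ∀ a, Q a ≤ 1 := by
    intro a
    have := Finset.single_le_sum (f := Q) (fun i _ => (hQ i).le) (Finset.mem_univ a)
    rwa [hQsum] at this
  have hκ1 : κ ≤ 1 := le_trans (hκle (Classical.arbitrary Y)) (hP1 _)
  have hlog2 : 1 ≤ 2 * Real.log 2 := by
    nlinarith [Real.log_two_gt_d9]
  set C := 2 * Real.log 2 / κ with hCdef
  have hC1 : 1 ≤ C := by
    rw [hCdef, le_div_iff₀ hκpos]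
    linarith
  have hpoint : ∀ a, Q a * Real.log (Q a / P a) ≤
      C * (P a * Real.log (P a / Q a)) + (1 + C) * (Q a - P a) := by
    intro a
    have ht : 0 < Q a / P a := div_pos (hQ a) (hP a)
    have htC : Q a / P a ≤ C := by
      have h1 : Q a / P a ≤ 1 / κ := div_le_div₀ zero_le_one (hQ1 a) hκpos (hκle a)
      have h2 : 1 / κ ≤ C := by
        rw [hCdef]
        gcongr
      linarith
    have hPa : P a ≠ 0 := ne_of_gt (hP a)
    have hk := key_ineq hC1 ht htC
    have hmul := mul_le_mul_of_nonneg_left hk (hP a).le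
    have hloginv : Real.log (P a / Q a) = - Real.log (Q a / P a) := by
      rw [← Real.log_inv, inv_div]
    have expand : P a * ((C + Q a / P a) * Real.log (Q a / P a)) =
        C * P a * Real.log (Q a / P a) + Q a * Real.log (Q a / P a) := by
      field_simp
    have expand2 : P a * ((1 + C) * (Q a / P a - 1)) = (1 + C) * (Q a - P a) := by
      field_simp
    rw [expand, expand2] at hmul
    rw [hloginv]
    linarith
  have hsum := Finset.sum_le_sum (fun a (_ : a ∈ Finset.univ) => hpoint a)
  rw [klDiv, klDiv]
  calc ∑ a : Y, Q a * Real.log (Q a / P a)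
      ≤ ∑ a : Y, (C * (P a * Real.log (P a / Q a)) + (1 + C) * (Q a - P a)) := hsum
    _ = C * (∑ a : Y, P a * Real.log (P a / Q a)) + (1 + C) * ((∑ a, Q a) - ∑ a, P a) := by
        rw [Finset.sum_add_distrib, ← Finset.mul_sum, ← Finset.mul_sum, Finset.sum_sub_distrib]
    _ = C * ∑ a : Y, P a * Real.log (P a / Q a) := by
        rw [hQsum, hPsum]
        ring
end

section
/- Let P_e be a probability distribution on X × X with all entries strictly positive that is a product distribution, i.e., P_e(x,y) = P_i(x)·P_j(y). Let Π_e be the r²×r² diagonal matrix with entries 1/P_e(x,y), and let H_e be the Hessian of the mutual information functional I(vec(Q)) evaluated at Q = P_e. Then the matrix I - Π_e^{-1/2} H_e Π_e^{-1/2} is positive semidefinite with eigenvalue 0, so the maximum eigenvalue of Π_e^{-1/2} H_e Π_e^{-1/2} equals 1, and hence max{μ ≥ 0 : Π_e ⪰ μ·H_e} = 1. -/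
open Finset

/-- Mutual information of a joint distribution `Q` on `X × X`, viewed as a function of
the vector of entries `vec(Q) ∈ ℝ^{r²}`. -/
noncomputable def mutInfo {r : ℕ} (Q : Fin r × Fin r → ℝ) : ℝ :=
  ∑ z : Fin r × Fin r,
    Q z * Real.log (Q z / ((∑ y : Fin r, Q (z.1, y)) * (∑ x : Fin r, Q (x, z.2))))

/-- The Hessian matrix of the mutual information functional at `P`, with entries the
second partial derivatives of `mutInfo` in the coordinate directions. -/
noncomputable def miHessian {r : ℕ} (P : Fin r × Fin r → ℝ) :
    Matrix (Fin r × Fin r) (Fin r × Fin r) ℝ :=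
  fun a b =>
    fderiv ℝ (fun Q : Fin r × Fin r → ℝ =>
      fderiv ℝ mutInfo Q (Pi.single b 1)) P (Pi.single a 1)

/-! Near a positive `Q`, `I(Q) = H(X) + H(Y) - H(X,Y)` is a signed sum of `negMulLog` composed
with linear functionals, so its Hessian is `diag(1/Q)` minus the row terms `1/Q_i(x)` and the
column terms `1/Q_j(y)`. At a product `P_e = p ⊗ q` (with `p`, `q` normalised), conjugating by
`D = diag(√P_e)` gives `S = 1 - K` with `K = 1 ⊗ √q√qᵀ + √p√pᵀ ⊗ 1 ⪰ 0` (`marginalGram`), and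
`K (c ⊗ d) = 0` for any `c ⊥ √p`, `d ⊥ √q`, which exist nonzero as `r ≥ 2`. Since
`Π_e - μ H_e = D⁻¹ (1 - μ S) D⁻¹`, the condition `Π_e ⪰ μ H_e` is `1 ⪰ μ S`, which holds at
`μ = 1` and forces `μ ≤ 1` on the eigenvector `c ⊗ d`. -/

open Filter Topology Real Matrix
open scoped Kronecker

section SecondDerivative

variable {E ι : Type*} [NormedAddCommGroup E] [NormedSpace ℝ E] [Fintype ι]
  (ℓ : ι → E →L[ℝ] ℝ) (c : ι → ℝ) {φ φ' φ'' : ℝ → ℝ}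

theorem hasFDerivAt_sum_mul_comp {Q : E} (h : ∀ i, HasDerivAt φ (φ' (ℓ i Q)) (ℓ i Q)) :
    HasFDerivAt (fun Q => ∑ i, c i * φ (ℓ i Q)) (∑ i, (c i * φ' (ℓ i Q)) • ℓ i) Q := by
  refine HasFDerivAt.fun_sum fun i _ => ?_
  rw [mul_smul]
  exact ((h i).comp_hasFDerivAt Q (ℓ i).hasFDerivAt).const_mul (c i)

theorem fderiv_fderiv_sum_mul_comp {U : Set ℝ} (hU : IsOpen U)
    (hφ : ∀ t ∈ U, HasDerivAt φ (φ' t) t) (hφ' : ∀ t ∈ U, HasDerivAt φ' (φ'' t) t)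
    {P : E} (hP : ∀ i, ℓ i P ∈ U) (u v : E) :
    fderiv ℝ (fun Q => fderiv ℝ (fun Q => ∑ i, c i * φ (ℓ i Q)) Q u) P v
      = ∑ i, c i * ℓ i u * φ'' (ℓ i P) * ℓ i v := by
  have hnear : ∀ᶠ Q in 𝓝 P, ∀ i, ℓ i Q ∈ U := eventually_all.2 fun i =>
    (ℓ i).continuous.continuousAt.preimage_mem_nhds (hU.mem_nhds (hP i))
  have hgrad : (fun Q => fderiv ℝ (fun Q => ∑ i, c i * φ (ℓ i Q)) Q u) =ᶠ[𝓝 P]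
      fun Q => ∑ i, (c i * ℓ i u) * φ' (ℓ i Q) := by
    filter_upwards [hnear] with Q hQ
    simp only [(hasFDerivAt_sum_mul_comp ℓ c fun i => hφ _ (hQ i)).fderiv,
      _root_.sum_apply, _root_.smul_apply, smul_eq_mul, mul_right_comm]
  rw [hgrad.fderiv_eq, (hasFDerivAt_sum_mul_comp ℓ _ fun i => hφ' _ (hP i)).fderiv]
  simp only [_root_.sum_apply, _root_.smul_apply, smul_eq_mul]

end SecondDerivative

section MutualInformation

variable {r : ℕ}

theorem sum_row_pos {Q : Fin r × Fin r → ℝ} (hQ : ∀ z, 0 < Q z) (x : Fin r) :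
    0 < ∑ y, Q (x, y) :=
  sum_pos (fun _ _ => hQ _) ⟨x, mem_univ x⟩

theorem sum_col_pos {Q : Fin r × Fin r → ℝ} (hQ : ∀ z, 0 < Q z) (y : Fin r) :
    0 < ∑ x, Q (x, y) :=
  sum_pos (fun _ _ => hQ _) ⟨y, mem_univ y⟩

theorem mutInfo_eq_negMulLog {Q : Fin r × Fin r → ℝ} (hQ : ∀ z, 0 < Q z) :
    mutInfo Q = ∑ x, negMulLog (∑ y, Q (x, y)) + ∑ y, negMulLog (∑ x, Q (x, y))
      - ∑ z, negMulLog (Q z) := by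
  calc mutInfo Q = ∑ z : Fin r × Fin r, (Q z * log (Q z) - Q z * log (∑ y, Q (z.1, y))
        - Q z * log (∑ x, Q (x, z.2))) := by
        refine sum_congr rfl fun z _ => ?_
        rw [log_div (hQ z).ne' (mul_pos (sum_row_pos hQ _) (sum_col_pos hQ _)).ne',
          log_mul (sum_row_pos hQ _).ne' (sum_col_pos hQ _).ne']
        ring
    _ = _ := by
        simp only [sum_sub_distrib, negMulLog, Fintype.sum_prod_type, ← sum_mul, neg_mul,
          sum_neg_distrib]
        rw [sum_comm (f := fun x y => Q (x, y) * log (∑ x, Q (x, y)))]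
        simp only [← sum_mul]
        ring

def miFunctional : (Fin r × Fin r) ⊕ (Fin r ⊕ Fin r) → (Fin r × Fin r → ℝ) →L[ℝ] ℝ
  | .inl z => ContinuousLinearMap.proj z
  | .inr (.inl x) => ∑ y, ContinuousLinearMap.proj (x, y)
  | .inr (.inr y) => ∑ x, ContinuousLinearMap.proj (x, y)

def miSign : (Fin r × Fin r) ⊕ (Fin r ⊕ Fin r) → ℝ
  | .inl _ => -1
  | .inr _ => 1

theorem miHessian_apply {P : Fin r × Fin r → ℝ} (hP : ∀ z, 0 < P z) (a b : Fin r × Fin r) :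
    miHessian P a b = (if a = b then (P a)⁻¹ else 0)
      - (if a.1 = b.1 then (∑ y, P (a.1, y))⁻¹ else 0)
      - (if a.2 = b.2 then (∑ x, P (x, a.2))⁻¹ else 0) := by
  have hmi : mutInfo =ᶠ[𝓝 P] fun Q => ∑ i, miSign i * negMulLog (miFunctional i Q) := by
    have hpos : ∀ᶠ Q in 𝓝 P, ∀ z, 0 < Q z := eventually_all.2 fun z =>
      continuousAt_const.eventually_lt (continuous_apply z).continuousAt (hP z)
    filter_upwards [hpos] with Q hQ
    simp only [mutInfo_eq_negMulLog hQ, miSign, miFunctional, Fintype.sum_sum_type,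
      ContinuousLinearMap.proj_apply, neg_mul, one_mul, sum_neg_distrib, _root_.sum_apply]
    ring
  have hgrad : (fun Q => fderiv ℝ mutInfo Q (Pi.single b (1 : ℝ))) =ᶠ[𝓝 P] fun Q =>
      fderiv ℝ (fun Q : Fin r × Fin r → ℝ => ∑ i, miSign i * negMulLog (miFunctional i Q)) Q
        (Pi.single b (1 : ℝ)) := by
    filter_upwards [hmi.fderiv (𝕜 := ℝ)] with Q hQ
    rw [hQ]
  rw [miHessian, hgrad.fderiv_eq, fderiv_fderiv_sum_mul_comp _ _ isOpen_Ioi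
    (φ' := fun t => -log t - 1) (φ'' := fun t => -t⁻¹)
    (fun t ht => hasDerivAt_negMulLog (ne_of_gt ht))
    (fun t ht => ((hasDerivAt_log (ne_of_gt ht)).neg.sub_const 1))]
  · simp only [miSign, miFunctional, mul_neg, neg_mul, sum_neg_distrib, Fintype.sum_sum_type,
      ContinuousLinearMap.proj_apply, Pi.single_apply, Prod.ext_iff, ite_and, mul_ite, mul_one,
      mul_zero, ite_mul, one_mul, zero_mul, Fintype.sum_prod_type, sum_ite_irrel, sum_ite_eq',
      mem_univ, if_true, sum_const_zero, Prod.mk.eta, _root_.sum_apply, neg_add_rev]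
    split_ifs <;> ring
  · rintro (z | x | y)
    · exact hP z
    · simpa [miFunctional] using sum_row_pos hP x
    · simpa [miFunctional] using sum_col_pos hP y

end MutualInformation

section MatrixLemmas

theorem kronecker_mulVec_tensor {R l m p n : Type*} [CommSemiring R] [Fintype m] [Fintype n]
    (A : Matrix l m R) (B : Matrix p n R) (c : m → R) (d : n → R) :
    (A ⊗ₖ B) *ᵥ (fun z => c z.1 * d z.2) = fun z => (A *ᵥ c) z.1 * (B *ᵥ d) z.2 := by
  ext ⟨i, j⟩
  simp only [mulVec, dotProduct, kroneckerMap_apply, Fintype.sum_prod_type, sum_mul_sum]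
  exact sum_congr rfl fun _ _ => sum_congr rfl fun _ _ => by ring

def marginalGram {n : Type*} [DecidableEq n] (v w : n → ℝ) : Matrix (n × n) (n × n) ℝ :=
  1 ⊗ₖ vecMulVec w w + vecMulVec v v ⊗ₖ 1

variable {n : Type*} [Fintype n] [DecidableEq n]

theorem posSemidef_marginalGram (v w : n → ℝ) :
    (marginalGram v w).PosSemidef := by
  have hvv : ∀ v : n → ℝ, (vecMulVec v v).PosSemidef := fun v => by
    simpa using posSemidef_vecMulVec_self_star v
  exact (PosSemidef.one.kronecker (hvv w)).add ((hvv v).kronecker PosSemidef.one)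

theorem exists_ne_zero_marginalGram_mulVec_eq_zero [Nontrivial n] (v w : n → ℝ) :
    ∃ u ≠ 0, marginalGram v w *ᵥ u = 0 := by
  obtain ⟨c, hc0, hc⟩ := exists_ne_zero_dotProduct_eq_zero v
  obtain ⟨d, hd0, hd⟩ := exists_ne_zero_dotProduct_eq_zero w
  obtain ⟨x, hx⟩ := Function.ne_iff.1 hc0
  obtain ⟨y, hy⟩ := Function.ne_iff.1 hd0
  refine ⟨fun z => c z.1 * d z.2, Function.ne_iff.2 ⟨(x, y), mul_ne_zero hx hy⟩, ?_⟩
  ext z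
  simp [marginalGram, add_mulVec, kronecker_mulVec_tensor, vecMulVec_mulVec,
    dotProduct_comm _ c, dotProduct_comm _ d, hc, hd]

theorem mul_le_one_of_posSemidef_one_sub_smul {S : Matrix n n ℝ} {μ ν : ℝ}
    (hS : (1 - μ • S).PosSemidef) {u : n → ℝ} (hu : u ≠ 0)
    (hSu : S *ᵥ u = ν • u) : μ * ν ≤ 1 := by
  have hquad := hS.dotProduct_mulVec_nonneg u
  have hpos := dotProduct_star_self_pos_iff.2 hu
  simp only [sub_mulVec, one_mulVec, smul_mulVec, hSu, dotProduct_sub, dotProduct_smul,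
    smul_eq_mul] at hquad
  nlinarith

theorem posSemidef_diagonal_one_div_sub_smul_iff {P : n → ℝ} (hP : ∀ i, 0 < P i)
    (H : Matrix n n ℝ) (μ : ℝ) :
    (diagonal (fun i => 1 / P i) - μ • H).PosSemidef
      ↔ (1 - μ • (diagonal (fun i => √(P i)) * H * diagonal (fun i => √(P i)))).PosSemidef := by
  have hsqrt : ∀ i, √(P i) ≠ 0 := fun i => (sqrt_pos.2 (hP i)).ne'
  have hE : IsUnit (diagonal fun i => (√(P i))⁻¹) :=
    isUnit_diagonal.2 (Pi.isUnit_iff.2 fun i => (hsqrt i).isUnit.inv)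
  have hconj : star (diagonal fun i => (√(P i))⁻¹)
        * (1 - μ • (diagonal (fun i => √(P i)) * H * diagonal (fun i => √(P i))))
        * diagonal (fun i => (√(P i))⁻¹)
      = diagonal (fun i => 1 / P i) - μ • H := by
    rw [star_eq_conjTranspose, diagonal_conjTranspose, star_trivial]
    ext i j
    simp only [mul_diagonal, diagonal_mul, Matrix.sub_apply, Matrix.smul_apply, one_apply,
      diagonal_apply, smul_eq_mul]
    have := hsqrt i
    have := hsqrt j
    split_ifs with hij
    · subst hij
      have := (hP i).ne'
      field_simp
      rw [sq_sqrt (hP i).le]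
      ring
    · field_simp
      ring
  rw [← hconj]
  exact hE.posSemidef_star_left_conjugate_iff

end MatrixLemmas

section ProductDistribution

variable {r : ℕ} {p q : Fin r → ℝ}

theorem miHessian_apply_of_product (hp : ∀ x, 0 < p x) (hp1 : ∑ x, p x = 1)
    (hq : ∀ y, 0 < q y) (hq1 : ∑ y, q y = 1) (a b : Fin r × Fin r) :
    miHessian (fun z => p z.1 * q z.2) a b = (if a = b then (p a.1 * q a.2)⁻¹ else 0)
      - (if a.1 = b.1 then (p a.1)⁻¹ else 0) - (if a.2 = b.2 then (q a.2)⁻¹ else 0) := by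
  simp only [miHessian_apply fun z => mul_pos (hp z.1) (hq z.2), ← mul_sum, ← sum_mul, hp1, hq1,
    mul_one, one_mul]

theorem sqrt_diagonal_mul_miHessian_of_product (hp : ∀ x, 0 < p x) (hp1 : ∑ x, p x = 1)
    (hq : ∀ y, 0 < q y) (hq1 : ∑ y, q y = 1) :
    diagonal (fun z => √(p z.1 * q z.2)) * miHessian (fun z => p z.1 * q z.2)
        * diagonal (fun z => √(p z.1 * q z.2))
      = 1 - marginalGram (fun x => √(p x)) (fun y => √(q y)) := by
  ext ⟨a₁, a₂⟩ ⟨b₁, b₂⟩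
  have hp' : ∀ x, √(p x) ^ 2 = p x := fun x => sq_sqrt (hp x).le
  have hq' : ∀ y, √(q y) ^ 2 = q y := fun y => sq_sqrt (hq y).le
  simp only [mul_diagonal, diagonal_mul, miHessian_apply_of_product hp hp1 hq hq1,
    marginalGram, Matrix.sub_apply, Matrix.add_apply, one_apply, kroneckerMap_apply,
    vecMulVec_apply, Prod.mk.injEq, sqrt_mul (hp _).le]
  have := (hp a₁).ne'
  have := (hq a₂).ne'
  split_ifs <;> simp_all <;> field_simp <;> simp only [hp', hq'] <;> ring

end ProductDistribution

/-- For a product distribution `P_e` with positive entries, with `Π_e = diag(1/P_e)` and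
`H_e` the Hessian of mutual information at `P_e`, the matrix
`I - Π_e^{-1/2} H_e Π_e^{-1/2}` is positive semidefinite with eigenvalue `0`; hence the
maximum eigenvalue of `Π_e^{-1/2} H_e Π_e^{-1/2}` equals `1`, and
`max{μ ≥ 0 : Π_e ⪰ μ·H_e} = 1`. -/
theorem hessian_sdp_optimal_value (r : ℕ) (hr : 2 ≤ r)
    (Pi' Pj : Fin r → ℝ)
    (hPi : ∀ x, 0 < Pi' x) (hPisum : ∑ x, Pi' x = 1)
    (hPj : ∀ y, 0 < Pj y) (hPjsum : ∑ y, Pj y = 1)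
    (Pe : Fin r × Fin r → ℝ) (hPe : ∀ z, Pe z = Pi' z.1 * Pj z.2)
    (PiMat : Matrix (Fin r × Fin r) (Fin r × Fin r) ℝ)
    (hPiMat : PiMat = Matrix.diagonal fun z => 1 / Pe z)
    (S : Matrix (Fin r × Fin r) (Fin r × Fin r) ℝ)
    (hS : S = (Matrix.diagonal fun z => Real.sqrt (Pe z)) * miHessian Pe *
      (Matrix.diagonal fun z => Real.sqrt (Pe z))) :
    ((1 : Matrix (Fin r × Fin r) (Fin r × Fin r) ℝ) - S).PosSemidef ∧
    (∃ v : Fin r × Fin r → ℝ, v ≠ 0 ∧ S.mulVec v = (1 : ℝ) • v) ∧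
    IsGreatest {μ : ℝ | ∃ v : Fin r × Fin r → ℝ, v ≠ 0 ∧ S.mulVec v = μ • v} 1 ∧
    IsGreatest {μ : ℝ | 0 ≤ μ ∧ (PiMat - μ • miHessian Pe).PosSemidef} 1 := by
  have hPe_pos : ∀ z, 0 < Pe z := fun z => hPe z ▸ mul_pos (hPi z.1) (hPj z.2)
  have hSK : S = 1 - marginalGram (fun x => √(Pi' x)) (fun y => √(Pj y)) := by
    rw [hS, funext hPe]
    exact sqrt_diagonal_mul_miHessian_of_product hPi hPisum hPj hPjsum
  have hSDP : ∀ μ : ℝ, (PiMat - μ • miHessian Pe).PosSemidef ↔ (1 - μ • S).PosSemidef := by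
    rw [hPiMat, hS]
    exact posSemidef_diagonal_one_div_sub_smul_iff hPe_pos _
  have hI : (1 - S).PosSemidef := by simpa [hSK] using posSemidef_marginalGram _ _
  have : Nontrivial (Fin r) := Fin.nontrivial_iff_two_le.2 hr
  obtain ⟨u, hu0, hKu⟩ := exists_ne_zero_marginalGram_mulVec_eq_zero
    (fun x => √(Pi' x)) (fun y => √(Pj y))
  have hSu : S *ᵥ u = (1 : ℝ) • u := by
    rw [hSK, sub_mulVec, one_mulVec, hKu, sub_zero, one_smul]
  refine ⟨hI, ⟨u, hu0, hSu⟩, ⟨⟨u, hu0, hSu⟩, ?_⟩, ⟨⟨zero_le_one, ?_⟩, ?_⟩⟩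
  · rintro ν ⟨x, hx0, hx⟩
    simpa using mul_le_one_of_posSemidef_one_sub_smul (μ := 1) (by rwa [one_smul]) hx0 hx
  · exact (hSDP 1).2 (by rwa [one_smul])
  · rintro μ ⟨-, hμ⟩
    simpa using mul_le_one_of_posSemidef_one_sub_smul ((hSDP μ).1 hμ) hu0 hSu
end
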